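/- arXiv:2408.04630 — 2 statements merged into one kernel-verified Lean document; each statement's English description precedes it below -/
import Mathlib

section
/- Let k be a field of characteristic 2, R = k[x_{i,j}]/(x_{i,j}²), and n ≥ 2. Then m·I_{n+1} ⊆ I_n, where m is the maximal homogeneous ideal (x_{i,j} : i<j) of R, and I_n, I_{n+1} are the ideals generated by the Plücker elements together with cycle monomials of lengths 3,...,n and 3,...,n+1 respectively. -/
open MvPolynomial

/-- Index type for the variables `x_{i,j}`, `i ≠ j`: unordered pairs of distinct naturals. -/
abbrev V : Type := {s : Sym2 ℕ // ¬ s.IsDiag}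

noncomputable section

variable (k : Type) [Field k]

/-- The variable `x_{i,j}` in the polynomial ring `S = k[x_{i,j} : i < j]`,
with the conventions `x_{i,j} = x_{j,i}` and `x_{i,i} = 0`. -/
def xS (i j : ℕ) : MvPolynomial V k :=
  if h : i = j then 0 else X ⟨s(i, j), by rwa [Sym2.mk_isDiag_iff]⟩

lemma xS_comm (i j : ℕ) : xS k i j = xS k j i := by
  unfold xS
  rcases eq_or_ne i j with h | h
  · subst h; rfl
  · rw [dif_neg h, dif_neg (Ne.symm h)]
    exact congrArg _ (Subtype.ext (Sym2.eq_swap))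

/-- The ideal `m^{[2]}` generated by the squares of all variables. -/
def sqIdealS : Ideal (MvPolynomial V k) :=
  Ideal.span (Set.range fun v : V => (X v : MvPolynomial V k) ^ 2)

/-- The ring `R = k[x_{i,j}]/(x_{i,j}^2)`. -/
abbrev Rr : Type := MvPolynomial V k ⧸ sqIdealS k

/-- The variable `x_{i,j}` as an element of `R`. -/
def x (i j : ℕ) : Rr k := Ideal.Quotient.mk _ (xS k i j)

/-- The Plücker element. -/
def pluck (a b c d : ℕ) : Rr k :=
  x k a b * x k c d + x k a c * x k b d + x k a d * x k b c

/-- The cycle monomial on the vertices `v 0, v 1, ..., v (r-1)` (in `R`). -/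
def cyc {r : ℕ} (v : Fin r → ℕ) : Rr k :=
  ∏ t : Fin r, x k (v t) (v ⟨(t.val + 1) % r, Nat.mod_lt _ (Nat.lt_of_le_of_lt (Nat.zero_le _) t.2)⟩)

/-- The standard `n`-cycle monomial `w_n = x_{1,2} x_{2,3} ⋯ x_{n,1}`. -/
def w (n : ℕ) : Rr k := cyc k (fun t : Fin n => (t : ℕ) + 1)

/-- The ideal `I_n`, generated by the Plücker elements and the cycle monomials
of lengths `3, ..., n`. -/
def In (n : ℕ) : Ideal (Rr k) :=
  Ideal.span
    ({p | ∃ a b c d : ℕ, a ≠ b ∧ a ≠ c ∧ a ≠ d ∧ b ≠ c ∧ b ≠ d ∧ c ≠ d ∧ p = pluck k a b c d} ∪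
     {p | ∃ r : ℕ, 3 ≤ r ∧ r ≤ n ∧ ∃ v : Fin r → ℕ, Function.Injective v ∧ p = cyc k v})

/-- The `i`-th column `g(e_i)` of an infinite matrix `g`. -/
def col (g : (ℕ →₀ k) →ₗ[k] (ℕ →₀ k)) (i : ℕ) : ℕ →₀ k := g (Finsupp.single i 1)

/-- The image of the variable `x_{i,j} = e_i ∧ e_j` under `g ∈ GL`, in characteristic two:
`Σ_{a,b} g_{a,i} g_{b,j} x_{a,b}` (as element of `S`). -/
def glXS (g : (ℕ →₀ k) →ₗ[k] (ℕ →₀ k)) (i j : ℕ) : MvPolynomial V k :=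
  ∑ a ∈ (col k g i).support, ∑ b ∈ (col k g j).support,
    (col k g i a * col k g j b) • xS k a b

lemma glXS_comm (g : (ℕ →₀ k) →ₗ[k] (ℕ →₀ k)) (i j : ℕ) :
    glXS k g i j = glXS k g j i := by
  unfold glXS
  rw [Finset.sum_comm]
  refine Finset.sum_congr rfl fun b _ => Finset.sum_congr rfl fun a _ => ?_
  rw [mul_comm, xS_comm]

/-- The algebra endomorphism of `S` induced by `g ∈ GL` (valid in characteristic two). -/
def glS (g : (ℕ →₀ k) →ₗ[k] (ℕ →₀ k)) : MvPolynomial V k →ₐ[k] MvPolynomial V k :=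
  aeval (fun v : V => Sym2.lift ⟨fun i j => glXS k g i j, fun i j => glXS_comm k g i j⟩ v.1)

lemma xS_sq_mem (a b : ℕ) : (xS k a b) ^ 2 ∈ sqIdealS k := by
  unfold xS
  split
  · simp
  · exact Ideal.subset_span ⟨_, rfl⟩

lemma glXS_sq_mem [CharP k 2] (g : (ℕ →₀ k) →ₗ[k] (ℕ →₀ k)) (i j : ℕ) :
    (glXS k g i j) ^ 2 ∈ sqIdealS k := by
  haveI : CharP (MvPolynomial V k) 2 := inferInstance
  haveI : Fact (Nat.Prime 2) := ⟨Nat.prime_two⟩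
  unfold glXS
  rw [sum_pow_char]
  refine Ideal.sum_mem _ fun a _ => ?_
  rw [sum_pow_char]
  refine Ideal.sum_mem _ fun b _ => ?_
  rw [smul_pow, Algebra.smul_def]
  exact Ideal.mul_mem_left _ _ (xS_sq_mem k a b)

lemma glS_maps_sq [CharP k 2] (g : (ℕ →₀ k) →ₗ[k] (ℕ →₀ k)) :
    ∀ p ∈ sqIdealS k, glS k g p ∈ sqIdealS k := by
  intro p hp
  have : Ideal.map (glS k g).toRingHom (sqIdealS k) ≤ sqIdealS k := by
    rw [Ideal.map_le_iff_le_comap, sqIdealS, Ideal.span_le]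
    rintro q ⟨v, rfl⟩
    simp only [SetLike.mem_coe, Ideal.mem_comap, AlgHom.toRingHom_eq_coe, RingHom.coe_coe,
      map_pow]
    obtain ⟨s, hs⟩ := v
    induction s using Sym2.ind with
    | _ i j =>
      show (glS k g (X ⟨s(i,j), hs⟩)) ^ 2 ∈ sqIdealS k
      rw [glS, aeval_X]
      simpa using glXS_sq_mem k g i j
  exact this (Ideal.mem_map_of_mem _ hp)

/-- The algebra endomorphism of `R = S/(x_{i,j}^2)` induced by `g ∈ GL`
(in characteristic two the ideal of squares is preserved). -/
def glR [CharP k 2] (g : (ℕ →₀ k) →ₗ[k] (ℕ →₀ k)) : Rr k →ₐ[k] Rr k :=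
  Ideal.Quotient.liftₐ (sqIdealS k) ((Ideal.Quotient.mkₐ k (sqIdealS k)).comp (glS k g))
    (fun p hp => by
      simp only [AlgHom.comp_apply, Ideal.Quotient.mkₐ_eq_mk, Ideal.Quotient.eq_zero_iff_mem]
      exact glS_maps_sq k g p hp)

/-- `g ∈ GL(k^∞)`: a linear automorphism of `k^∞` fixing all but finitely
many of the basis vectors. -/
def IsGL (g : (ℕ →₀ k) ≃ₗ[k] (ℕ →₀ k)) : Prop :=
  {i : ℕ | g (Finsupp.single i 1) ≠ Finsupp.single i 1}.Finite

/-- A `GL`-stable ideal of `R`. -/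
def GLStable [CharP k 2] (J : Ideal (Rr k)) : Prop :=
  ∀ g : (ℕ →₀ k) ≃ₗ[k] (ℕ →₀ k), IsGL k g →
    Ideal.map (glR k g.toLinearMap) J ≤ J

/-- The `GL`-stable ideal of `R` generated by an element `f`:
the span of the `GL`-orbit of `f`. -/
def glIdeal [CharP k 2] (f : Rr k) : Ideal (Rr k) :=
  Ideal.span {p | ∃ g : (ℕ →₀ k) ≃ₗ[k] (ℕ →₀ k), IsGL k g ∧ p = glR k g.toLinearMap f}

/-- The maximal homogeneous ideal of `R`, generated by all the variables. -/
def mIdeal : Ideal (Rr k) := Ideal.span (Set.range fun v : V => Ideal.Quotient.mk _ (X v))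

/-!
It suffices to show `x_{ij} · w ∈ I_n` for every cycle monomial `w` of length `n + 1`; write
monomials along walks. If `i` and `j` both lie on the cycle, the chord `ij` splits `x_{ij} w`
into a cycle of length at most `n` times a path (or `x_{ij}² = 0` occurs). If only `i` does,
with `i - p - s` on the cycle, the Plücker relation for `(j, i, p, s)` trades `x_{ij} x_{ps}`
for `x_{jp} x_{is}` up to a multiple of `x_{ip}² = 0`, which shortcuts the cycle past `p`.
If neither does, the Plücker relation for `(i, j, c, p)`, with `cp` an edge of the cycle,
rewrites `x_{ij} w` as the sum of the two Hamiltonian paths `i ⋯ j` and `j ⋯ i` through the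
same interior. Modulo Plücker relations the interior of a path can be permuted freely, since
`x_{ap} x_{pq} x_{qc} ≡ x_{aq} x_{qp} x_{pc}`; so the two paths agree and, in characteristic
two, their sum vanishes.
-/

def pluckerIdeal : Ideal (Rr k) :=
  Ideal.span
    {p | ∃ a b c d : ℕ, a ≠ b ∧ a ≠ c ∧ a ≠ d ∧ b ≠ c ∧ b ≠ d ∧ c ≠ d ∧ p = pluck k a b c d}

def pathMon : List ℕ → Rr k
  | a :: b :: l => x k a b * pathMon (b :: l)
  | _ => 1

section
variable {k}

lemma Rr.two_eq_zero [CharP k 2] : (2 : Rr k) = 0 := by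
  rw [← map_ofNat (algebraMap k (Rr k)) 2, CharTwo.two_eq_zero, map_zero]

lemma add_mem_of_smodEq [CharP k 2] {I : Ideal (Rr k)} {a b : Rr k} (h : a ≡ b [SMOD I]) :
    a + b ∈ I := by
  have : a + b = a - b + 2 * b := by ring
  rw [this, Rr.two_eq_zero, zero_mul, add_zero]
  exact SModEq.sub_mem.1 h

lemma smodEq_of_add_mem [CharP k 2] {I : Ideal (Rr k)} {a b : Rr k} (h : a + b ∈ I) :
    a ≡ b [SMOD I] := by
  have : a - b = a + b - 2 * b := by ring
  rw [SModEq.sub_mem, this, Rr.two_eq_zero, zero_mul, sub_zero]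
  exact h

lemma x_comm (i j : ℕ) : x k i j = x k j i := by
  rw [x, xS_comm, x]

@[simp] lemma x_self (i : ℕ) : x k i i = 0 := by
  simp [x, xS]

@[simp] lemma x_mul_self (i j : ℕ) : x k i j * x k i j = 0 := by
  rw [x, ← map_mul, ← pow_two, Ideal.Quotient.eq_zero_iff_mem]
  exact xS_sq_mem k i j

lemma pluck_mem_pluckerIdeal {a b c d : ℕ} (hab : a ≠ b) (hac : a ≠ c) (had : a ≠ d)
    (hbc : b ≠ c) (hbd : b ≠ d) (hcd : c ≠ d) : pluck k a b c d ∈ pluckerIdeal k :=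
  Ideal.subset_span ⟨a, b, c, d, hab, hac, had, hbc, hbd, hcd, rfl⟩

lemma pluckerIdeal_le_In (n : ℕ) : pluckerIdeal k ≤ In k n :=
  Ideal.span_mono Set.subset_union_left

lemma cyc_mem_In {n r : ℕ} (h3 : 3 ≤ r) (hr : r ≤ n) {v : Fin r → ℕ} (hv : v.Injective) :
    cyc k v ∈ In k n :=
  Ideal.subset_span (Or.inr ⟨r, h3, hr, v, hv, rfl⟩)

lemma mk_X_eq_x (e : V) : ∃ i j, i ≠ j ∧ Ideal.Quotient.mk (sqIdealS k) (X e) = x k i j := by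
  obtain ⟨s, hs⟩ := e
  induction s using Sym2.ind with
  | _ i j =>
    have hij : i ≠ j := by rwa [Sym2.mk_isDiag_iff] at hs
    exact ⟨i, j, hij, by rw [x, xS, dif_neg hij]⟩

@[simp] lemma pathMon_singleton (a : ℕ) : pathMon k [a] = 1 := rfl

@[simp] lemma pathMon_cons_cons (a b : ℕ) (l : List ℕ) :
    pathMon k (a :: b :: l) = x k a b * pathMon k (b :: l) := rfl

lemma pathMon_append (l₁ : List ℕ) (a : ℕ) (l₂ : List ℕ) :
    pathMon k (l₁ ++ a :: l₂) = pathMon k (l₁ ++ [a]) * pathMon k (a :: l₂) := by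
  induction l₁ with
  | nil => simp
  | cons b t ih =>
    cases t with
    | nil => simp
    | cons c t => simp only [List.cons_append, pathMon_cons_cons] at ih ⊢; rw [ih, mul_assoc]

lemma pathMon_append_pair (l : List ℕ) (a b : ℕ) :
    pathMon k (l ++ [a, b]) = pathMon k (l ++ [a]) * x k a b := by
  rw [pathMon_append, pathMon_cons_cons, pathMon_singleton, mul_one]

lemma pathMon_reverse : ∀ l : List ℕ, pathMon k l.reverse = pathMon k l
  | [] | [_] => rfl
  | a :: b :: t => by
    rw [List.reverse_cons, List.reverse_cons, List.append_assoc, List.singleton_append,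
      pathMon_append_pair, ← List.reverse_cons, pathMon_reverse (b :: t), pathMon_cons_cons,
      x_comm, mul_comm]

lemma pathMon_cons_ofFn (a : ℕ) {m : ℕ} (u : Fin (m + 1) → ℕ) :
    pathMon k (a :: List.ofFn u) = x k a (u 0) * pathMon k (List.ofFn u) := by
  rw [List.ofFn_succ]; rfl

lemma pathMon_ofFn : ∀ {m : ℕ} (u : Fin (m + 1) → ℕ),
    pathMon k (List.ofFn u) = ∏ t : Fin m, x k (u t.castSucc) (u t.succ)
  | 0, u => by simp
  | m + 1, u => by
    rw [List.ofFn_succ, pathMon_cons_ofFn, pathMon_ofFn, Fin.prod_univ_succ]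
    simp only [Fin.castSucc_zero, Fin.succ_castSucc]

lemma cyc_eq_prod {m : ℕ} (v : Fin (m + 1) → ℕ) :
    cyc k v = ∏ t, x k (v t) (v (t + 1)) := by
  unfold cyc
  refine Finset.prod_congr rfl fun t _ => ?_
  congr 2
  ext
  simp [Fin.val_add]

lemma cyc_eq_pathMon {m : ℕ} (v : Fin (m + 1) → ℕ) :
    cyc k v = pathMon k (List.ofFn v ++ [v 0]) := by
  rw [List.ofFn_succ', List.concat_eq_append, List.append_assoc, List.singleton_append,
    pathMon_append_pair, ← List.concat_eq_append, ← List.ofFn_succ', pathMon_ofFn, cyc_eq_prod,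
    Fin.prod_univ_castSucc]
  simp only [Fin.coeSucc_eq_succ, Fin.last_add_one]

lemma pathMon_closed_mem_In {n a : ℕ} {K : List ℕ} (hnd : (a :: K).Nodup) (hK : K.length < n) :
    pathMon k (a :: (K ++ [a])) ∈ In k n := by
  match K, hnd, hK with
  | [], _, _ => simp
  | [p], _, _ => simp [x_comm p a]
  | p :: q :: T, hnd, hK =>
    have hcyc : cyc k (a :: p :: q :: T).get = pathMon k (a :: (p :: q :: T ++ [a])) :=
      (cyc_eq_pathMon _).trans (by rw [List.ofFn_get]; rfl)
    exact hcyc ▸ cyc_mem_In (by simp) (by simpa using hK) (List.nodup_iff_injective_get.1 hnd)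

lemma cyc_eq_pathMon_rotate {m : ℕ} (v : Fin (m + 1) → ℕ) (s : Fin (m + 1)) :
    ∃ K : List ℕ, (v s :: K).Perm (List.ofFn v) ∧ cyc k v = pathMon k (v s :: (K ++ [v s])) := by
  set v' : Fin (m + 1) → ℕ := v ∘ Equiv.addRight s
  have hv' : v' 0 = v s := by simp [v']
  refine ⟨List.ofFn fun t : Fin m => v' t.succ, ?_, ?_⟩
  · rw [← hv', ← List.ofFn_succ]
    exact Equiv.Perm.ofFn_comp_perm _ v
  · have hrot : cyc k v' = cyc k v := by
      rw [cyc_eq_prod, cyc_eq_prod]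
      exact Fintype.prod_equiv (Equiv.addRight s) _ _ fun t => by simp [v', add_right_comm]
    rw [← hrot, cyc_eq_pathMon, List.ofFn_succ, hv']
    rfl

lemma x_mul_closed_mem_In_of_mem {n i j : ℕ} (hn : 2 ≤ n) {K : List ℕ} (hnd : (i :: K).Nodup)
    (hj : j ∈ K) (hK : K.length ≤ n) :
    x k i j * pathMon k (i :: (K ++ [i])) ∈ In k n := by
  obtain ⟨K₁, K₂, rfl⟩ := List.append_of_mem hj
  have hsplit : pathMon k (i :: (K₁ ++ j :: K₂ ++ [i])) =
      pathMon k (i :: (K₁ ++ [j])) * pathMon k (j :: (K₂ ++ [i])) := by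
    simpa using pathMon_append (k := k) (i :: K₁) j (K₂ ++ [i])
  simp only [List.length_append, List.length_cons] at hK
  rw [hsplit]
  rcases (by omega : K₁.length + 1 < n ∨ K₂.length + 1 < n) with h₁ | h₂
  · rw [← mul_assoc, x_comm i j]
    refine Ideal.mul_mem_right _ _ (pathMon_closed_mem_In (K := i :: K₁) ?_ (by simpa using h₁))
    have hsub : (i :: K₁ ++ [j]).Sublist (i :: (K₁ ++ j :: K₂)) :=
      (((List.nil_sublist K₂).cons_cons j).append_left K₁).cons_cons i
    exact (List.perm_append_singleton j _).nodup_iff.1 (hnd.sublist hsub)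
  · rw [mul_left_comm]
    refine Ideal.mul_mem_left _ _ (pathMon_closed_mem_In (K := j :: K₂) ?_ (by simpa using h₂))
    exact hnd.sublist ((List.sublist_append_right K₁ _).cons_cons i)

variable [CharP k 2]

lemma x_mul_x_mul_x_smodEq_swap {a p q c : ℕ} (hap : a ≠ p) (haq : a ≠ q) (hac : a ≠ c)
    (hpq : p ≠ q) (hpc : p ≠ c) (hqc : q ≠ c) :
    x k a p * (x k p q * x k q c) ≡ x k a q * (x k q p * x k p c) [SMOD pluckerIdeal k] := by
  refine smodEq_of_add_mem ?_
  have hid : x k a p * (x k p q * x k q c) + x k a q * (x k q p * x k p c) =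
      pluck k a p q c * x k p q := by
    rw [pluck, x_comm q p]
    linear_combination (-x k a c) * x_mul_self (k := k) p q
  exact hid ▸ Ideal.mul_mem_right _ _ (pluck_mem_pluckerIdeal hap haq hac hpq hpc hqc)

lemma pathMon_smodEq_of_perm {l₁ l₂ : List ℕ} (h : l₁.Perm l₂) (b : ℕ) :
    ∀ a, (a :: (l₁ ++ [b])).Nodup →
      pathMon k (a :: (l₁ ++ [b])) ≡ pathMon k (a :: (l₂ ++ [b])) [SMOD pluckerIdeal k] := by
  induction h with
  | nil => exact fun _ _ => SModEq.rfl
  | cons y _ ih =>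
    intro a hnd
    simp only [List.cons_append, pathMon_cons_cons]
    exact SModEq.rfl.mul (ih y (List.nodup_cons.1 hnd).2)
  | swap y z l =>
    intro a hnd
    obtain ⟨c, tl, hc⟩ : ∃ c tl, l ++ [b] = c :: tl := List.exists_cons_of_ne_nil (by simp)
    simp only [List.cons_append, hc, pathMon_cons_cons] at hnd ⊢
    simp only [List.nodup_cons, List.mem_cons, not_or] at hnd
    have h := (x_mul_x_mul_x_smodEq_swap (k := k) hnd.1.1 hnd.1.2.1 hnd.1.2.2.1 hnd.2.1.1
      hnd.2.1.2.1 hnd.2.2.1.1).mul (SModEq.refl (pathMon k (c :: tl)))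
    simpa only [mul_assoc] using h
  | trans h₁₂ _ ih₁ ih₂ =>
    intro a hnd
    refine (ih₁ a hnd).trans (ih₂ a ?_)
    exact ((h₁₂.append_right [b]).cons a).nodup_iff.1 hnd

lemma pathMon_smodEq_swap_ends {a b : ℕ} {Q : List ℕ} (hnd : (a :: (Q ++ [b])).Nodup) :
    pathMon k (a :: (Q ++ [b])) ≡ pathMon k (b :: (Q ++ [a])) [SMOD pluckerIdeal k] := by
  have hrev : pathMon k (b :: (Q ++ [a])) = pathMon k (a :: (Q.reverse ++ [b])) := by
    rw [← pathMon_reverse]; simp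
  rw [hrev]
  exact pathMon_smodEq_of_perm (List.reverse_perm Q).symm b a hnd

lemma x_mul_closed_mem_pluckerIdeal_of_disjoint {i j c : ℕ} {K : List ℕ} (hij : i ≠ j)
    (hnd : (c :: K).Nodup) (hi : i ∉ c :: K) (hj : j ∉ c :: K) :
    x k i j * pathMon k (c :: (K ++ [c])) ∈ pluckerIdeal k := by
  obtain _ | ⟨p, T⟩ := K
  · simp
  simp only [List.mem_cons, not_or] at hi hj
  have hcp : c ≠ p := by rintro rfl; simp at hnd
  set Q := p :: (T ++ [c])
  have hpath : ∀ a b, pathMon k (a :: (Q ++ [b])) = x k a p * pathMon k Q * x k c b := by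
    intro a b
    rw [show a :: (Q ++ [b]) = a :: p :: T ++ [c, b] by simp [Q], pathMon_append_pair]
    rfl
  have hid : x k i j * pathMon k (c :: Q) = pluck k i j c p * pathMon k Q +
      (pathMon k (i :: (Q ++ [j])) + pathMon k (j :: (Q ++ [i]))) := by
    rw [hpath, hpath, pluck, pathMon_cons_cons, x_comm c i, x_comm c j]
    linear_combination
      (-(x k i c * x k j p + x k i p * x k j c) * pathMon k Q) * Rr.two_eq_zero (k := k)
  have hQ : (i :: (Q ++ [j])).Nodup := by
    simp only [Q, List.nodup_cons, List.nodup_append, List.mem_cons, List.mem_append] at hnd ⊢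
    aesop
  rw [show c :: (p :: T ++ [c]) = c :: Q by simp [Q], hid]
  exact add_mem (Ideal.mul_mem_right _ _ (pluck_mem_pluckerIdeal hij hi.1 hi.2.1 hj.1 hj.2.1 hcp))
    (add_mem_of_smodEq (pathMon_smodEq_swap_ends hQ))

lemma x_mul_closed_mem_In_of_notMem {n i j : ℕ} {K : List ℕ} (hnd : (i :: K).Nodup)
    (hj : j ∉ i :: K) (hK : K.length ≤ n) :
    x k i j * pathMon k (i :: (K ++ [i])) ∈ In k n := by
  match K, hnd, hj, hK with
  | [], _, _, _ => simp
  | [p], _, _, _ => simp [x_comm p i]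
  | p :: s :: T, hnd, hj, hK =>
    set Z := pathMon k (s :: (T ++ [i]))
    have hid : x k i j * pathMon k (i :: (p :: s :: T ++ [i])) =
        pluck k j i p s * (x k i p * Z) +
          x k j p * x k i p * pathMon k (i :: (s :: T ++ [i])) := by
      simp only [List.cons_append, pathMon_cons_cons, pluck]
      rw [x_comm j i]
      linear_combination (-(x k j s * Z)) * x_mul_self (k := k) i p -
        (x k j p * x k i s * x k i p * Z) * Rr.two_eq_zero (k := k)
    simp only [List.mem_cons, not_or] at hj
    simp only [List.nodup_cons, List.mem_cons, not_or] at hnd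
    rw [hid]
    refine add_mem (Ideal.mul_mem_right _ _ (pluckerIdeal_le_In n ?_)) (Ideal.mul_mem_left _ _ ?_)
    · exact pluck_mem_pluckerIdeal hj.1 hj.2.1 hj.2.2.1 hnd.1.1 hnd.1.2.1 hnd.2.1.1
    · refine pathMon_closed_mem_In ?_ (by simp at hK ⊢; omega)
      simp only [List.nodup_cons, List.mem_cons, not_or]
      exact ⟨⟨hnd.1.2.1, hnd.1.2.2⟩, hnd.2.2⟩

lemma x_mul_cyc_mem_In_of_mem_range {n i j : ℕ} (hn : 2 ≤ n) (hij : i ≠ j)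
    {v : Fin (n + 1) → ℕ} (hv : v.Injective) (hi : i ∈ Set.range v) :
    x k i j * cyc k v ∈ In k n := by
  obtain ⟨s, rfl⟩ := hi
  obtain ⟨K, hperm, hcyc⟩ := cyc_eq_pathMon_rotate (k := k) v s
  have hnd := hperm.nodup_iff.2 (List.nodup_ofFn.2 hv)
  have hK : K.length = n := by simpa using hperm.length_eq
  rw [hcyc]
  by_cases hj : j ∈ K
  · exact x_mul_closed_mem_In_of_mem hn hnd hj hK.le
  · exact x_mul_closed_mem_In_of_notMem hnd (by simp [hj, Ne.symm hij]) hK.le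

lemma x_mul_cyc_mem_In {n i j : ℕ} (hn : 2 ≤ n) (hij : i ≠ j) {v : Fin (n + 1) → ℕ}
    (hv : v.Injective) : x k i j * cyc k v ∈ In k n := by
  by_cases hi : i ∈ Set.range v
  · exact x_mul_cyc_mem_In_of_mem_range hn hij hv hi
  by_cases hj : j ∈ Set.range v
  · rw [x_comm]
    exact x_mul_cyc_mem_In_of_mem_range hn hij.symm hv hj
  obtain ⟨K, hperm, hcyc⟩ := cyc_eq_pathMon_rotate (k := k) v 0
  have hnd := hperm.nodup_iff.2 (List.nodup_ofFn.2 hv)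
  have hoff : ∀ a ∉ Set.range v, a ∉ v 0 :: K := fun a ha h =>
    ha (List.mem_ofFn.1 (hperm.mem_iff.1 h))
  rw [hcyc]
  exact pluckerIdeal_le_In n
    (x_mul_closed_mem_pluckerIdeal_of_disjoint hij hnd (hoff i hi) (hoff j hj))

end

set_option synthInstance.maxHeartbeats 1000000 in
theorem statement_14 [CharP k 2] (n : ℕ) :
    mIdeal k * In k (n + 1) ≤ In k n := by
  rw [mIdeal, In, Ideal.span_mul_span', Ideal.span_le, Set.mul_subset_iff]
  rintro _ ⟨e, rfl⟩ g hg
  obtain ⟨i, j, hij, he⟩ := mk_X_eq_x (k := k) e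
  simp only [he, SetLike.mem_coe]
  rcases hg with ⟨a, b, c, d, hab, hac, had, hbc, hbd, hcd, rfl⟩ | ⟨r, h3, hr, v, hv, rfl⟩
  · exact Ideal.mul_mem_left _ _
      (pluckerIdeal_le_In n (pluck_mem_pluckerIdeal hab hac had hbc hbd hcd))
  rcases hr.lt_or_eq with hr | rfl
  · exact Ideal.mul_mem_left _ _ (cyc_mem_In h3 (Nat.lt_succ_iff.1 hr) hv)
  · exact x_mul_cyc_mem_In (by omega) hij hv

end
end

section
/- Let k be a field of characteristic 2 and φ: R → Λ[x_1,x_2,...,y_1,y_2,...] the algebra map x_{i,j} ↦ x_i y_j + x_j y_i from R = k[x_{i,j}]/(x_{i,j}²) to the exterior algebra. Then the union I_∞ = ⋃_{n≥2} I_n is contained in ker(φ), where I_n is generated by the Plücker elements and cycle monomials of length 3,...,n. -/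
open MvPolynomial

noncomputable section

variable (k : Type) [Field k]

open ExteriorAlgebra

/-- The exterior algebra on the variables `x_1, x_2, ..., y_1, y_2, ...`. -/
abbrev Lam : Type := ExteriorAlgebra k ((ℕ ⊕ ℕ) →₀ k)

/-- The generator `x_i` of the exterior algebra. -/
def xg (i : ℕ) : Lam k := ι k (Finsupp.single (Sum.inl i) 1)

/-- The generator `y_i` of the exterior algebra. -/
def yg (i : ℕ) : Lam k := ι k (Finsupp.single (Sum.inr i) 1)

/-- The image `x_i y_j + x_j y_i` of the variable `x_{i,j}`. -/
def phiVal (i j : ℕ) : Lam k := xg k i * yg k j + xg k j * yg k i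

lemma phiVal_comm (i j : ℕ) : phiVal k i j = phiVal k j i := add_comm _ _

lemma iota_prod_sq_zero (u v : (ℕ ⊕ ℕ) →₀ k) :
    (ι k u * ι k v) * (ι k u * ι k v) = 0 := by
  have h : ι k v * ι k u = -(ι k u * ι k v) :=
    eq_neg_of_add_eq_zero_left (by rw [add_comm]; exact ι_add_mul_swap u v)
  have e : (ι k u * ι k v) * (ι k u * ι k v)
      = ι k u * (ι k v * ι k u) * ι k v := by noncomm_ring
  rw [e, h]
  have e2 : ι k u * -(ι k u * ι k v) * ι k v
      = -((ι k u * ι k u) * (ι k v * ι k v)) := by noncomm_ring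
  rw [e2, ι_sq_zero, zero_mul, neg_zero]

section CharTwo
variable [CharP k 2]

instance : CharP (Lam k) 2 :=
  charP_of_injective_algebraMap (ExteriorAlgebra.algebraMap_leftInverse _).injective 2

lemma iota_comm (u v : (ℕ ⊕ ℕ) →₀ k) : ι k u * ι k v = ι k v * ι k u := by
  have h : ι k u * ι k v = -(ι k v * ι k u) :=
    eq_neg_of_add_eq_zero_left (ι_add_mul_swap u v)
  rw [h, CharTwo.neg_eq]

lemma phiVal_sq (i j : ℕ) : phiVal k i j * phiVal k i j = 0 := by
  have hc : ∀ u v : (ℕ ⊕ ℕ) →₀ k, Commute (ι k u) (ι k v) := fun u v => iota_comm k u v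
  have hab : Commute (xg k i * yg k j) (xg k j * yg k i) :=
    ((hc _ _).mul_right (hc _ _)).mul_left ((hc _ _).mul_right (hc _ _))
  unfold phiVal
  unfold xg yg at hab ⊢
  rw [add_mul, mul_add, mul_add, iota_prod_sq_zero, iota_prod_sq_zero, hab.eq]
  rw [zero_add, add_zero, CharTwo.add_self_eq_zero]

lemma phiVal_commute (i j a b : ℕ) :
    Commute (phiVal k i j) (phiVal k a b) := by
  have hc : ∀ u v : (ℕ ⊕ ℕ) →₀ k, Commute (ι k u) (ι k v) := fun u v => iota_comm k u v
  have hm : ∀ i j a b : ℕ, Commute (xg k i * yg k j) (xg k a * yg k b) := fun i j a b =>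
    ((hc _ _).mul_right (hc _ _)).mul_left ((hc _ _).mul_right (hc _ _))
  exact ((hm _ _ _ _).add_right (hm _ _ _ _)).add_left ((hm _ _ _ _).add_right (hm _ _ _ _))

/-- The (commutative) subalgebra of the exterior algebra generated by the
elements `x_i y_j + x_j y_i`. -/
def CommLam : Subalgebra k (Lam k) :=
  Algebra.adjoin k (Set.range fun p : ℕ × ℕ => phiVal k p.1 p.2)

noncomputable instance : CommSemiring (CommLam k) :=
  { (CommLam k).toSemiring with
    mul_comm := (Algebra.isMulCommutative_adjoin k (by
      rintro _ ⟨⟨i, j⟩, rfl⟩ _ ⟨⟨a, b⟩, rfl⟩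
      exact (phiVal_commute k i j a b).eq)).is_comm.comm }

/-- The substitution homomorphism `S → Λ`, `x_{i,j} ↦ x_i y_j + x_j y_i`. -/
def phiS : MvPolynomial V k →ₐ[k] Lam k :=
  (CommLam k).val.comp <| aeval fun v : V =>
    Sym2.lift
      ⟨fun i j => (⟨phiVal k i j, Algebra.subset_adjoin ⟨(i, j), rfl⟩⟩ : CommLam k),
       fun i j => Subtype.ext (phiVal_comm k i j)⟩ v.1

lemma phiS_X (i j : ℕ) (h : ¬ (s(i,j) : Sym2 ℕ).IsDiag) :
    phiS k (X (⟨s(i,j), h⟩ : V)) = phiVal k i j := by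
  simp [phiS, aeval_X]

lemma phiS_maps_sq : ∀ p ∈ sqIdealS k, phiS k p = 0 := by
  intro p hp
  have : sqIdealS k ≤ RingHom.ker (phiS k).toRingHom := by
    rw [sqIdealS, Ideal.span_le]
    rintro q ⟨v, rfl⟩
    obtain ⟨s, hs⟩ := v
    induction s using Sym2.ind with
    | _ i j =>
      show phiS k ((X ⟨s(i,j), hs⟩ : MvPolynomial V k) ^ 2) = 0
      rw [map_pow, phiS_X, sq, phiVal_sq]
  exact this hp

/-- The well-defined map `φ : R → Λ`, `x_{i,j} ↦ x_i y_j + x_j y_i`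
(in characteristic two the squares of the variables map to zero). -/
def phiR : Rr k →ₐ[k] Lam k :=
  Ideal.Quotient.liftₐ (sqIdealS k) (phiS k) (phiS_maps_sq k)

end CharTwo

/-!
In characteristic two the exterior algebra is commutative, so `φ(x_{i,j}) = x_i y_j + x_j y_i`
can be computed in a commutative ring. Expanding a Plücker element gives twice a sum of
monomials, hence `0`. Since `x_j² = y_j² = 0`, we have
`φ(x_{i,j}) φ(x_{j,l}) = x_j y_j φ(x_{i,l})`, so the product around a cycle telescopes to a
multiple of `φ(x_{i,i}) = 2 x_i y_i = 0`.
-/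

theorem ExteriorAlgebra.commute_of_charP_two {R M : Type*} [CommRing R] [CharP R 2]
    [AddCommGroup M] [Module R M] (a b : ExteriorAlgebra R M) : Commute a b := by
  have : CharP (ExteriorAlgebra R M) 2 :=
    charP_of_injective_algebraMap (algebraMap_leftInverse M).injective 2
  have hι : ∀ u v : M, Commute (ι R u) (ι R v) := fun u v =>
    CharTwo.add_eq_zero.mp (ι_add_mul_swap u v)
  have hιa : ∀ u, Commute (ι R u) a := by
    intro u
    induction a using ExteriorAlgebra.induction with
    | algebraMap r => exact Algebra.commute_algebraMap_right r _
    | ι v => exact hι u v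
    | mul c d hc hd => exact hc.mul_right hd
    | add c d hc hd => exact hc.add_right hd
  induction b using ExteriorAlgebra.induction with
  | algebraMap r => exact Algebra.commute_algebraMap_right r a
  | ι u => exact (hιa u).symm
  | mul c d hc hd => exact hc.mul_right hd
  | add c d hc hd => exact hc.add_right hd

abbrev ExteriorAlgebra.commRingOfCharPTwo (R M : Type*) [CommRing R] [CharP R 2]
    [AddCommGroup M] [Module R M] : CommRing (ExteriorAlgebra R M) :=
  { (inferInstance : Ring (ExteriorAlgebra R M)) with
    mul_comm := fun a b => (commute_of_charP_two a b).eq }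

section SymmProd

variable {A I : Type*} [CommRing A]

def symmProd (x y : I → A) (i j : I) : A := x i * y j + x j * y i

variable (x y : I → A)

theorem symmProd_self [CharP A 2] (i : I) : symmProd x y i i = 0 :=
  CharTwo.add_self_eq_zero _

/-- The twelve monomials of the expansion cancel in pairs. -/
theorem symmProd_plucker [CharP A 2] (a b c d : I) :
    symmProd x y a b * symmProd x y c d + symmProd x y a c * symmProd x y b d
      + symmProd x y a d * symmProd x y b c = 0 := by
  unfold symmProd
  linear_combination (x a * x c * y b * y d + x a * x d * y b * y c + x b * x c * y a * y d
    + x b * x d * y a * y c + x a * x b * y c * y d + x c * x d * y a * y b)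
      * CharTwo.two_eq_zero (R := A)

variable {x y}

theorem symmProd_mul_symmProd (hx : ∀ i, x i * x i = 0) (hy : ∀ i, y i * y i = 0)
    (i j l : I) :
    symmProd x y i j * symmProd x y j l = x j * y j * symmProd x y i l := by
  unfold symmProd
  linear_combination x i * x l * hy j + y i * y l * hx j

theorem prod_range_symmProd (hx : ∀ i, x i * x i = 0) (hy : ∀ i, y i * y i = 0)
    (w : ℕ → I) (n : ℕ) :
    ∏ t ∈ Finset.range (n + 1), symmProd x y (w t) (w (t + 1)) =
      (∏ t ∈ Finset.range n, x (w (t + 1)) * y (w (t + 1))) * symmProd x y (w 0) (w (n + 1)) := by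
  induction n with
  | zero => simp
  | succ n ih =>
    rw [Finset.prod_range_succ, ih, mul_assoc, symmProd_mul_symmProd hx hy,
      Finset.prod_range_succ]
    ring

theorem prod_range_symmProd_of_periodic [CharP A 2] (hx : ∀ i, x i * x i = 0)
    (hy : ∀ i, y i * y i = 0) (w : ℕ → I) {r : ℕ} (hr : 0 < r) (hw : w r = w 0) :
    ∏ t ∈ Finset.range r, symmProd x y (w t) (w (t + 1)) = 0 := by
  obtain ⟨n, rfl⟩ := Nat.exists_eq_add_one_of_ne_zero hr.ne'
  rw [prod_range_symmProd hx hy, hw, symmProd_self, mul_zero]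

end SymmProd

theorem xg_mul_self (i : ℕ) : xg k i * xg k i = 0 := ι_sq_zero _

theorem yg_mul_self (i : ℕ) : yg k i * yg k i = 0 := ι_sq_zero _

section

variable [CharP k 2]

attribute [local instance] ExteriorAlgebra.commRingOfCharPTwo

theorem phiR_x (i j : ℕ) : phiR k (x k i j) = symmProd (xg k) (yg k) i j := by
  change phiS k (xS k i j) = phiVal k i j
  unfold xS
  split_ifs with h
  · subst h
    rw [map_zero, phiVal, CharTwo.add_self_eq_zero]
  · exact phiS_X k i j _

theorem phiR_pluck (a b c d : ℕ) : phiR k (pluck k a b c d) = 0 := by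
  simp only [pluck, map_add, map_mul, phiR_x]
  exact symmProd_plucker _ _ a b c d

theorem phiR_cyc {r : ℕ} (hr : 0 < r) (v : Fin r → ℕ) : phiR k (cyc k v) = 0 := by
  set w : ℕ → ℕ := fun t => v ⟨t % r, Nat.mod_lt _ hr⟩
  have hv : ∀ t : Fin r, v t = w t := fun t => by simp [w, Nat.mod_eq_of_lt t.2]
  have hw : ∀ t, w (t % r) = w t := fun t => by simp [w]
  rw [cyc, map_prod]
  simp only [phiR_x, hv, hw]
  rw [Fin.prod_univ_eq_prod_range (fun t => symmProd (xg k) (yg k) (w t) (w (t + 1)))]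
  exact prod_range_symmProd_of_periodic (xg_mul_self k) (yg_mul_self k) w hr (by simp [w])

end

/-- The union `I_∞ = ⋃_{n ≥ 2} I_n` is contained in the kernel of
`φ : R → Λ`, `x_{i,j} ↦ x_i y_j + x_j y_i`. -/
theorem statement_16 [CharP k 2] :
    ∀ n : ℕ, 2 ≤ n → ∀ p ∈ In k n, phiR k p = 0 := by
  intro n _ p hp
  suffices In k n ≤ RingHom.ker (phiR k) from this hp
  rw [In, Ideal.span_le]
  rintro q (⟨a, b, c, d, -, -, -, -, -, -, rfl⟩ | ⟨r, hr, -, v, -, rfl⟩)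
  · exact phiR_pluck k a b c d
  · exact phiR_cyc k (by omega) v

end
end
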